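/- Let r : ℂ → ℝ be a C² function of constant width w, and assume the functions r+ψ, (r+ψ)² − |σ|², and |σ|² − (r − w/2 + ψ)² are μ-integrable. For C > −w/2 define A(C) = ∫ℂ ((r + C + ψ)² − |σ|²) dμ and I(C) = 6·((1/2)(w+2C)·A(C) − (π/3)(w+2C)³) / (π(w+2C)³). If ∫ℂ (|σ|² − (r − w/2 + ψ)²) dμ ≥ 0, then I is monotone nondecreasing on (−w/2, ∞): for all −w/2 < C₁ ≤ C₂, I(C₁) ≤ I(C₂). -/

import Mathlib

open Complex MeasureTheory ComplexConjugate

noncomputable section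

/-- Wirtinger derivative ∂/∂ξ of a complex-valued function. -/
def wd (f : ℂ → ℂ) (ξ : ℂ) : ℂ :=
  (1 / 2) * (fderiv ℝ f ξ 1 - Complex.I * fderiv ℝ f ξ Complex.I)

/-- Wirtinger derivative ∂/∂ξ̄ of a real-valued function, as a complex number. -/
def wdbarR (r : ℂ → ℝ) (ξ : ℂ) : ℂ :=
  (1 / 2) * ((fderiv ℝ r ξ 1 : ℝ) + Complex.I * (fderiv ℝ r ξ Complex.I : ℝ))

/-- F = (1/2)(1+|ξ|²)² ∂r/∂ξ̄. -/
def Fcong (r : ℂ → ℝ) (ξ : ℂ) : ℂ :=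
  (1 / 2) * ((1 + Complex.normSq ξ) ^ 2 : ℝ) * wdbarR r ξ

/-- ψ = (1+|ξ|²)² ∂/∂ξ [F/(1+|ξ|²)²] (real-valued). -/
def psiSlope (r : ℂ → ℝ) (ξ : ℂ) : ℝ :=
  (((1 + Complex.normSq ξ) ^ 2 : ℝ) *
    wd (fun z => Fcong r z / (((1 + Complex.normSq z) ^ 2 : ℝ) : ℂ)) ξ).re

/-- σ = −∂(conj F)/∂ξ. -/
def sigmaSlope (r : ℂ → ℝ) (ξ : ℂ) : ℂ :=
  - wd (fun z => conj (Fcong r z)) ξ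

/-- The round sphere area measure in the stereographic coordinate. -/
def muSphere : Measure ℂ :=
  volume.withDensity fun ξ => ENNReal.ofReal (4 / (1 + Complex.normSq ξ) ^ 2)

/-- Constant width w: r(ξ) + r(−1/conj ξ) = w for all ξ ≠ 0. -/
def ConstWidth (r : ℂ → ℝ) (w : ℝ) : Prop :=
  ∀ ξ : ℂ, ξ ≠ 0 → r ξ + r (-1 / conj ξ) = w

/-! The support function `r + ψ` inherits constant width `w` from `r`: the antipodal map
`ξ ↦ -1/conj ξ` rescales the flat Laplacian by `|ξ|⁻⁴`, which turns `r(-1/conj ξ) = w - r ξ`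
into `ψ(-1/conj ξ) = -ψ ξ`. Since the antipodal map preserves `μ` and `μ(ℂ) = 4π`, this gives
`∫ (r + ψ) dμ = 2πw`, so `A(C) = π(w + 2C)² + k` with `k = A(0) - πw²`, and the hypothesis on
`σ` says exactly `k ≤ 0`. Then `I(C) = 1 + 3k / (π(w + 2C)²)` is nondecreasing. -/

open Filter Topology Set Laplacian

/-- Since `-1 / conj 0 = 0`, this is an involution of all of `ℂ`, and `ConstWidth r w` unfolds to
`∀ ξ ≠ 0, r ξ + r (antipodal ξ) = w`. -/
def antipodal (ξ : ℂ) : ℂ := -1 / conj ξ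

lemma antipodal_eq (ξ : ℂ) : antipodal ξ = conj (-ξ⁻¹) := by
  simp [antipodal, neg_div, one_div]

lemma antipodal_involutive : Function.Involutive antipodal := by
  intro ξ
  simp [antipodal_eq]

lemma normSq_antipodal (ξ : ℂ) : normSq (antipodal ξ) = (normSq ξ)⁻¹ := by
  simp [antipodal_eq]

lemma antipodal_image_compl_zero : antipodal '' {0}ᶜ = {0}ᶜ := by
  rw [antipodal_involutive.image_eq_preimage_symm]
  ext ξ
  simp [antipodal_eq]

def antipodalDeriv (ξ : ℂ) : ℂ →L[ℝ] ℂ := (conj ξ ^ 2)⁻¹ • (conjCLE : ℂ →L[ℝ] ℂ)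

lemma hasFDerivAt_antipodal {ξ : ℂ} (hξ : ξ ≠ 0) :
    HasFDerivAt antipodal (antipodalDeriv ξ) ξ := by
  have hinv : HasDerivAt (fun z : ℂ => -z⁻¹) ((conj ξ ^ 2)⁻¹) (conj ξ) := by
    have hc : conj ξ ≠ 0 := (map_ne_zero _).mpr hξ
    simpa using (hasDerivAt_inv hc).fun_neg
  have heq : antipodal = (fun z : ℂ => -z⁻¹) ∘ conj := by
    funext z; simp [antipodal, neg_div]
  rw [heq]
  refine ((hinv.hasFDerivAt.restrictScalars ℝ).comp ξ conjCLE.hasFDerivAt).congr_fderiv ?_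
  ext v
  simp [antipodalDeriv, mul_comm]

lemma det_antipodalDeriv (ξ : ℂ) : (antipodalDeriv ξ).det = -(normSq ξ ^ 2)⁻¹ := by
  have h : (antipodalDeriv ξ : ℂ →ₗ[ℝ] ℂ)
      = (Algebra.lmul ℝ ℂ (conj ξ ^ 2)⁻¹).comp conjAe.toLinearMap := by
    ext v
    simp [antipodalDeriv]
  rw [ContinuousLinearMap.det, h, LinearMap.det_comp, Complex.det_conjAe,
    ← Algebra.norm_apply, Algebra.norm_complex_apply]
  simp

section SphereMeasure

lemma hasDerivAt_neg_two_div_one_add_sq (y : ℝ) :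
    HasDerivAt (fun y : ℝ => -2 / (1 + y ^ 2)) (y * (4 / (1 + y ^ 2) ^ 2)) y := by
  refine ((hasDerivAt_const y (-2 : ℝ)).div ((hasDerivAt_pow 2 y).const_add 1)
    (by positivity)).congr_deriv ?_
  field_simp
  ring

lemma tendsto_neg_two_div_one_add_sq :
    Tendsto (fun y : ℝ => -2 / (1 + y ^ 2)) atTop (𝓝 0) :=
  (tendsto_atTop_add_const_left atTop 1 (tendsto_pow_atTop two_ne_zero)).const_div_atTop _

lemma integrableOn_mul_four_div_one_add_sq_sq :
    IntegrableOn (fun y : ℝ => y * (4 / (1 + y ^ 2) ^ 2)) (Ioi 0) :=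
  integrableOn_Ioi_deriv_of_nonneg' (fun y _ => hasDerivAt_neg_two_div_one_add_sq y)
    (fun y (hy : 0 < y) => by positivity) tendsto_neg_two_div_one_add_sq

lemma integral_mul_four_div_one_add_sq_sq :
    ∫ y in Ioi (0 : ℝ), y * (4 / (1 + y ^ 2) ^ 2) = 2 := by
  rw [integral_Ioi_of_hasDerivAt_of_nonneg' (fun y _ => hasDerivAt_neg_two_div_one_add_sq y)
    (fun y (hy : 0 < y) => by positivity) tendsto_neg_two_div_one_add_sq]
  norm_num

def sphereDensity (ξ : ℂ) : ℝ := 4 / (1 + normSq ξ) ^ 2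

lemma sphereDensity_eq_radial :
    sphereDensity = fun ξ => (fun y : ℝ => 4 / (1 + y ^ 2) ^ 2) ‖ξ‖ := by
  ext ξ
  simp [sphereDensity, Complex.normSq_eq_norm_sq]

lemma integrable_sphereDensity : Integrable sphereDensity := by
  rw [sphereDensity_eq_radial]
  refine (integrable_fun_norm_addHaar volume (E := ℂ)
    (f := fun y : ℝ => 4 / (1 + y ^ 2) ^ 2)).mpr ?_
  simpa using integrableOn_mul_four_div_one_add_sq_sq

lemma integral_sphereDensity : ∫ ξ, sphereDensity ξ = 4 * Real.pi := by
  rw [sphereDensity_eq_radial, integral_fun_norm_addHaar]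
  simp only [finrank_real_complex, measureReal_def, volume_ball, ENNReal.ofReal_one, one_pow,
    one_mul, ENNReal.coe_toReal, NNReal.coe_real_pi, Nat.add_one_sub_one, pow_one, smul_eq_mul,
    integral_mul_four_div_one_add_sq_sq, nsmul_eq_mul, Nat.cast_ofNat]
  ring

lemma sphereDensity_antipodal {ξ : ℂ} (hξ : ξ ≠ 0) :
    (normSq ξ ^ 2)⁻¹ * sphereDensity (antipodal ξ) = sphereDensity ξ := by
  have : normSq ξ ≠ 0 := by simpa using hξ
  simp only [sphereDensity, normSq_antipodal]
  field_simp
  ring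

lemma muSphere_eq : muSphere = volume.withDensity fun ξ => ((sphereDensity ξ).toNNReal : ENNReal) :=
  rfl

variable {E : Type*} [NormedAddCommGroup E] [NormedSpace ℝ E]

lemma integral_muSphere (g : ℂ → E) : ∫ ξ, g ξ ∂muSphere = ∫ ξ, sphereDensity ξ • g ξ := by
  have hρ : Continuous sphereDensity :=
    continuous_const.div (by fun_prop) fun ξ => by have := normSq_nonneg ξ; positivity
  rw [muSphere_eq, integral_withDensity_eq_integral_smul hρ.measurable.real_toNNReal]
  congr with ξ
  rw [NNReal.smul_def, Real.coe_toNNReal _ (by unfold sphereDensity; positivity)]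

lemma muSphere_univ : muSphere univ = ENNReal.ofReal (4 * Real.pi) := by
  rw [muSphere, withDensity_apply _ MeasurableSet.univ, Measure.restrict_univ,
    ← integral_sphereDensity, ofReal_integral_eq_lintegral_ofReal integrable_sphereDensity
      (ae_of_all _ fun ξ => by unfold sphereDensity; positivity)]
  rfl

instance : IsFiniteMeasure muSphere :=
  ⟨by rw [muSphere_univ]; exact ENNReal.ofReal_lt_top⟩

lemma muSphere_real_univ : muSphere.real univ = 4 * Real.pi := by
  rw [measureReal_def, muSphere_univ, ENNReal.toReal_ofReal (by positivity)]

theorem integral_comp_antipodal (g : ℂ → E) :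
    ∫ ξ, g (antipodal ξ) ∂muSphere = ∫ ξ, g ξ ∂muSphere := by
  have hs : MeasurableSet ({0}ᶜ : Set ℂ) := (measurableSet_singleton 0).compl
  have hcov := integral_image_eq_integral_abs_det_fderiv_smul volume hs
    (fun ξ hξ => (hasFDerivAt_antipodal hξ).hasFDerivWithinAt)
    antipodal_involutive.injective.injOn fun ξ => sphereDensity ξ • g ξ
  rw [integral_muSphere, integral_muSphere]
  calc ∫ ξ, sphereDensity ξ • g (antipodal ξ)
      = ∫ ξ in {0}ᶜ, sphereDensity ξ • g (antipodal ξ) := by rw [restrict_compl_singleton]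
    _ = ∫ ξ in {0}ᶜ, |(antipodalDeriv ξ).det| • sphereDensity (antipodal ξ) • g (antipodal ξ) := by
      refine setIntegral_congr_fun hs fun ξ hξ => ?_
      rw [det_antipodalDeriv, abs_neg, abs_inv, abs_of_nonneg (by positivity), smul_smul,
        sphereDensity_antipodal hξ]
    _ = ∫ ξ, sphereDensity ξ • g ξ := by
      rw [← hcov, antipodal_image_compl_zero, restrict_compl_singleton]

theorem integral_muSphere_of_constWidth {g : ℂ → ℝ} {w : ℝ} (hg : Integrable g muSphere)
    (hcw : ConstWidth g w) : ∫ ξ, g ξ ∂muSphere = 2 * Real.pi * w := by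
  have hae : (fun ξ => g (antipodal ξ)) =ᵐ[muSphere] fun ξ => w - g ξ := by
    filter_upwards [(withDensity_absolutelyContinuous _ _).ae_le (Measure.ae_ne volume 0)]
      with ξ hξ
    linarith [show g ξ + g (antipodal ξ) = w from hcw ξ hξ]
  have h := integral_comp_antipodal g
  rw [integral_congr_ae hae, integral_sub (integrable_const w) hg, integral_const,
    muSphere_real_univ, smul_eq_mul] at h
  linarith

end SphereMeasure

section Laplacian

variable {F : Type*} [NormedAddCommGroup F] [NormedSpace ℝ F]

lemma laplacian_complexPlane_apply (f : ℂ → F) (x : ℂ) :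
    Δ f x = fderiv ℝ (fderiv ℝ f) x 1 1 + fderiv ℝ (fderiv ℝ f) x I I := by
  simp [InnerProductSpace.laplacian_eq_iteratedFDeriv_complexPlane, iteratedFDeriv_two_apply]

lemma laplacian_comp_conj (f : ℂ → F) (x : ℂ) : Δ (f ∘ conj) x = Δ f (conj x) := by
  have h := conjCLE.iteratedFDerivWithin_comp_right f uniqueDiffOn_univ (mem_univ (conj x)) 2
  simp only [preimage_univ, iteratedFDerivWithin_univ] at h
  change iteratedFDeriv ℝ 2 (f ∘ conj) x = _ at h
  simp [InnerProductSpace.laplacian_eq_iteratedFDeriv_complexPlane, h, iteratedFDeriv_two_apply]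

lemma fderiv_fderiv_apply {E : Type*} [NormedAddCommGroup E] [NormedSpace ℝ E] {f : E → F}
    {x : E} (h : DifferentiableAt ℝ (fderiv ℝ f) x) (v w : E) :
    fderiv ℝ (fderiv ℝ f) x v w = fderiv ℝ (fun z => fderiv ℝ f z w) x v := by
  simp [fderiv_clm_apply h (differentiableAt_const w)]

lemma add_apply_I_mul_self (B : ℂ →L[ℝ] ℂ →L[ℝ] F) (a : ℂ) :
    B a a + B (I * a) (I * a) = normSq a • (B 1 1 + B I I) := by
  obtain ⟨p, q, rfl⟩ : ∃ p q : ℝ, a = p • (1 : ℂ) + q • I :=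
    ⟨a.re, a.im, by simp [Complex.real_smul, Complex.re_add_im]⟩
  have hIa : I * (p • (1 : ℂ) + q • I) = (-q) • (1 : ℂ) + p • I := by
    simp [Complex.real_smul, Complex.ext_iff]
  have hn : normSq (p • (1 : ℂ) + q • I) = p ^ 2 + q ^ 2 := by
    simp [Complex.real_smul, normSq_apply, sq]
  rw [hIa, hn]
  simp only [map_add, map_smul, add_apply, smul_apply]
  module

lemma fderiv_fderiv_comp_apply_self {u : ℂ → F} {g : ℂ → ℂ} {x : ℂ}
    (hu : ContDiffAt ℝ 2 u (g x)) (hg : AnalyticAt ℂ g x) (v : ℂ) :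
    fderiv ℝ (fderiv ℝ (u ∘ g)) x v v =
      fderiv ℝ (fderiv ℝ u) (g x) (v * deriv g x) (v * deriv g x)
        + fderiv ℝ u (g x) (v * v * deriv (deriv g) x) := by
  have hdiff : ∀ᶠ z in 𝓝 x, DifferentiableAt ℝ u (g z) :=
    hg.continuousAt.eventually ((hu.eventually (by simp)).mono
      fun y hy => hy.differentiableAt (by norm_num))
  have hev : (fun z => fderiv ℝ (u ∘ g) z v) =ᶠ[𝓝 x]
      fun z => fderiv ℝ u (g z) (v * deriv g z) := by
    filter_upwards [hdiff, hg.eventually_analyticAt] with z hz hgz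
    rw [fderiv_comp z hz (hgz.differentiableAt.restrictScalars ℝ),
      hgz.differentiableAt.fderiv_restrictScalars ℝ]
    simp [fderiv_eq_smul_deriv]
  have hu' : HasFDerivAt (fderiv ℝ u) (fderiv ℝ (fderiv ℝ u) (g x)) (g x) :=
    ((hu.fderiv_right (m := 1) (by norm_num)).differentiableAt (by norm_num)).hasFDerivAt
  have hg' := hg.differentiableAt.hasDerivAt.hasFDerivAt.restrictScalars ℝ
  have hg'' := hg.deriv.differentiableAt.hasDerivAt.hasFDerivAt.restrictScalars ℝ
  have hcomp : ContDiffAt ℝ 2 (u ∘ g) x := hu.comp x (hg.contDiffAt.restrict_scalars ℝ)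
  have hF : HasFDerivAt (fun z => fderiv ℝ u (g z) (v * deriv g z)) _ x :=
    (hu'.comp x hg').clm_apply (hg''.const_mul v)
  rw [fderiv_fderiv_apply ((hcomp.fderiv_right (m := 1) (by norm_num)).differentiableAt
    (by norm_num)), hev.fderiv_eq, hF.fderiv]
  simp [add_comm, mul_assoc]

/-- The second-order term vanishes because `g''·1² + g''·I² = 0`. -/
theorem laplacian_comp_analyticAt {u : ℂ → F} {g : ℂ → ℂ} {x : ℂ}
    (hu : ContDiffAt ℝ 2 u (g x)) (hg : AnalyticAt ℂ g x) :
    Δ (u ∘ g) x = normSq (deriv g x) • Δ u (g x) := by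
  have hvanish : fderiv ℝ u (g x) (1 * 1 * deriv (deriv g) x)
      + fderiv ℝ u (g x) (I * I * deriv (deriv g) x) = 0 := by
    rw [← map_add]; simp
  rw [laplacian_complexPlane_apply, laplacian_complexPlane_apply,
    fderiv_fderiv_comp_apply_self hu hg, fderiv_fderiv_comp_apply_self hu hg,
    ← add_apply_I_mul_self, add_add_add_comm, hvanish, add_zero, one_mul]

theorem laplacian_comp_antipodal {u : ℂ → F} {x : ℂ} (hx : x ≠ 0)
    (hu : ContDiffAt ℝ 2 u (antipodal x)) :
    Δ (u ∘ antipodal) x = (normSq x ^ 2)⁻¹ • Δ u (antipodal x) := by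
  have hsplit : u ∘ antipodal = (u ∘ conj) ∘ fun z => -z⁻¹ := by
    funext z; simp [antipodal_eq]
  have hu' : ContDiffAt ℝ 2 (u ∘ conj) (-x⁻¹) := by
    rw [antipodal_eq] at hu
    exact hu.comp _ conjCLE.contDiff.contDiffAt
  have hderiv : deriv (fun z : ℂ => -z⁻¹) x = (x ^ 2)⁻¹ := by simp
  rw [hsplit, laplacian_comp_analyticAt (g := fun z : ℂ => -z⁻¹) hu' (analyticAt_inv hx).fun_neg,
    hderiv, laplacian_comp_conj, ← antipodal_eq]
  simp

end Laplacian

section ConstWidth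

variable {r : ℂ → ℝ} {w : ℝ}

theorem laplacian_antipodal_of_constWidth (hr : ContDiff ℝ 2 r) (hcw : ConstWidth r w) {x : ℂ}
    (hx : x ≠ 0) : Δ r (antipodal x) = -(normSq x ^ 2 * Δ r x) := by
  have hloc : r ∘ antipodal =ᶠ[𝓝 x] (fun _ => w) - r := by
    filter_upwards [eventually_ne_nhds hx] with z hz
    simp only [Function.comp_apply, Pi.sub_apply]
    linarith [show r z + r (antipodal z) = w from hcw z hz]
  have h := laplacian_comp_antipodal hx hr.contDiffAt
  rw [(InnerProductSpace.laplacian_congr_nhds hloc).eq_of_nhds,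
    contDiffAt_const.laplacian_sub hr.contDiffAt] at h
  simp only [InnerProductSpace.laplacian_const, Pi.zero_apply, zero_sub, smul_eq_mul] at h
  have hn : normSq x ^ 2 ≠ 0 := by simpa using hx
  rw [← mul_neg, h, mul_inv_cancel_left₀ hn]

lemma Fcong_div (r : ℂ → ℝ) (z : ℂ) :
    Fcong r z / (((1 + normSq z) ^ 2 : ℝ) : ℂ) = 1 / 2 * wdbarR r z := by
  have : (((1 + normSq z) ^ 2 : ℝ) : ℂ) ≠ 0 := by
    have := normSq_nonneg z
    exact_mod_cast (by positivity : (1 + normSq z) ^ 2 ≠ 0)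
  rw [Fcong, div_eq_iff this]
  ring

lemma differentiableAt_wdbarR {ξ : ℂ} (hr : DifferentiableAt ℝ (fderiv ℝ r) ξ) :
    DifferentiableAt ℝ (wdbarR r) ξ := by
  unfold wdbarR
  fun_prop

lemma fderiv_wdbarR_apply {ξ : ℂ} (hr : DifferentiableAt ℝ (fderiv ℝ r) ξ) (v : ℂ) :
    fderiv ℝ (wdbarR r) ξ v
      = (fderiv ℝ (fderiv ℝ r) ξ v 1 + I * fderiv ℝ (fderiv ℝ r) ξ v I) / 2 := by
  have hd : ∀ u : ℂ, HasFDerivAt (fun z => ((fderiv ℝ r z u : ℝ) : ℂ))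
      (ofRealCLM.comp ((fderiv ℝ (fderiv ℝ r) ξ).flip u)) ξ := fun u =>
    ofRealCLM.hasFDerivAt.comp ξ (by simpa using hr.hasFDerivAt.clm_apply (hasFDerivAt_const u ξ))
  have h : HasFDerivAt (wdbarR r) _ ξ := ((hd 1).add ((hd I).const_mul I)).const_mul (1 / 2 : ℂ)
  rw [h.fderiv]
  simp only [one_div, smul_add, add_apply, smul_apply, ContinuousLinearMap.comp_apply,
    ContinuousLinearMap.flip_apply, ofRealCLM_apply, smul_eq_mul]
  ring

lemma re_wd_wdbarR {ξ : ℂ} (hr : DifferentiableAt ℝ (fderiv ℝ r) ξ) :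
    (wd (wdbarR r) ξ).re = Δ r ξ / 4 := by
  rw [wd, fderiv_wdbarR_apply hr, fderiv_wdbarR_apply hr, laplacian_complexPlane_apply]
  simp only [one_div, mul_re, inv_re, re_ofNat, normSq_ofNat, div_self_mul_self', sub_re,
    div_ofNat_re, add_re, ofReal_re, I_re, zero_mul, I_im, ofReal_im, mul_zero, sub_self, add_zero,
    div_ofNat_im, add_im, mul_im, one_mul, zero_add, zero_sub, sub_neg_eq_add, inv_im, im_ofNat,
    neg_zero, zero_div, sub_im, sub_zero]
  ring

theorem psiSlope_eq (hr : ContDiff ℝ 2 r) (ξ : ℂ) :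
    psiSlope r ξ = (1 + normSq ξ) ^ 2 * Δ r ξ / 8 := by
  have hd : Differentiable ℝ (fderiv ℝ r) :=
    (hr.fderiv_right (m := 1) le_rfl).differentiable one_ne_zero
  have hw : wd (fun z => Fcong r z / (((1 + normSq z) ^ 2 : ℝ) : ℂ)) ξ
      = wd (wdbarR r) ξ / 2 := by
    simp only [Fcong_div, wd, fderiv_const_mul (differentiableAt_wdbarR (hd ξ))]
    simp only [one_div, smul_apply, smul_eq_mul]
    ring
  rw [psiSlope, hw, re_ofReal_mul, div_ofNat_re, re_wd_wdbarR (hd ξ)]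
  ring

theorem psiSlope_antipodal (hr : ContDiff ℝ 2 r) (hcw : ConstWidth r w) {x : ℂ} (hx : x ≠ 0) :
    psiSlope r (antipodal x) = -psiSlope r x := by
  have hn : normSq x ≠ 0 := by simpa using hx
  rw [psiSlope_eq hr, psiSlope_eq hr, normSq_antipodal,
    laplacian_antipodal_of_constWidth hr hcw hx]
  field_simp
  ring

theorem ConstWidth.add_psiSlope (hr : ContDiff ℝ 2 r) (hcw : ConstWidth r w) :
    ConstWidth (fun ξ => r ξ + psiSlope r ξ) w := fun ξ hξ => by
  have h := psiSlope_antipodal hr hcw hξ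
  have hwidth : r ξ + r (antipodal ξ) = w := hcw ξ hξ
  change r ξ + psiSlope r ξ + (r (antipodal ξ) + psiSlope r (antipodal ξ)) = w
  linarith

end ConstWidth

lemma integral_add_const_sq_sub {α : Type*} [MeasurableSpace α] {μ : Measure α}
    [IsFiniteMeasure μ] {f g : α → ℝ} (hf : Integrable f μ)
    (hfg : Integrable (fun x => f x ^ 2 - g x) μ) (c : ℝ) :
    ∫ x, ((f x + c) ^ 2 - g x) ∂μ
      = ∫ x, (f x ^ 2 - g x) ∂μ + 2 * c * ∫ x, f x ∂μ + c ^ 2 * μ.real univ := by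
  have h : (fun x => (f x + c) ^ 2 - g x) = fun x => (f x ^ 2 - g x) + (2 * c * f x + c ^ 2) := by
    funext x; ring
  have hlin : Integrable (fun x => 2 * c * f x) μ := hf.const_mul _
  rw [h, integral_add hfg (hlin.fun_add (integrable_const _)), integral_add hlin (integrable_const _),
    integral_const_mul, integral_const, smul_eq_mul]
  ring

lemma volume_ratio_le_of_le {k s t : ℝ} (hk : k ≤ 0) (hs : 0 < s) (hst : s ≤ t) :
    6 * ((1 / 2) * s * (Real.pi * s ^ 2 + k) - (Real.pi / 3) * s ^ 3) / (Real.pi * s ^ 3)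
      ≤ 6 * ((1 / 2) * t * (Real.pi * t ^ 2 + k) - (Real.pi / 3) * t ^ 3) / (Real.pi * t ^ 3) := by
  have hform : ∀ u : ℝ, 0 < u → 6 * ((1 / 2) * u * (Real.pi * u ^ 2 + k)
      - (Real.pi / 3) * u ^ 3) / (Real.pi * u ^ 3) = 1 + 3 * k / (Real.pi * u ^ 2) := by
    intro u hu
    field_simp
    ring
  have ht : 0 < t := hs.trans_le hst
  rw [hform s hs, hform t ht, add_le_add_iff_left,
    div_le_div_iff₀ (by positivity) (by positivity)]
  have : Real.pi * s ^ 2 ≤ Real.pi * t ^ 2 := by gcongr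
  nlinarith

theorem ratio_monotone_along_normal_flow
    (r : ℂ → ℝ) (w : ℝ) (hr : ContDiff ℝ 2 r) (hcw : ConstWidth r w)
    (hint₀ : Integrable (fun ξ => r ξ + psiSlope r ξ) muSphere)
    (hint₁ : Integrable
      (fun ξ => (r ξ + psiSlope r ξ) ^ 2 - Complex.normSq (sigmaSlope r ξ)) muSphere)
    (hineq :
      0 ≤ ∫ ξ, (Complex.normSq (sigmaSlope r ξ) - (r ξ - w / 2 + psiSlope r ξ) ^ 2) ∂muSphere)
    (A I : ℝ → ℝ)
    (hA : ∀ C, A C =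
      ∫ ξ, ((r ξ + C + psiSlope r ξ) ^ 2 - Complex.normSq (sigmaSlope r ξ)) ∂muSphere)
    (hI : ∀ C, I C =
      6 * ((1 / 2) * (w + 2 * C) * A C - (Real.pi / 3) * (w + 2 * C) ^ 3)
        / (Real.pi * (w + 2 * C) ^ 3)) :
    ∀ C₁ C₂ : ℝ, -w / 2 < C₁ → C₁ ≤ C₂ → I C₁ ≤ I C₂ := by
  set a₀ := ∫ ξ, ((r ξ + psiSlope r ξ) ^ 2 - normSq (sigmaSlope r ξ)) ∂muSphere
  have hmean : ∫ ξ, (r ξ + psiSlope r ξ) ∂muSphere = 2 * Real.pi * w :=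
    integral_muSphere_of_constWidth hint₀ (hcw.add_psiSlope hr)
  have hshift : ∀ c, ∫ ξ, ((r ξ + psiSlope r ξ + c) ^ 2 - normSq (sigmaSlope r ξ)) ∂muSphere
      = Real.pi * (w + 2 * c) ^ 2 + (a₀ - Real.pi * w ^ 2) := fun c => by
    rw [integral_add_const_sq_sub hint₀ hint₁, hmean, muSphere_real_univ]
    ring
  have hA' : ∀ C, A C = Real.pi * (w + 2 * C) ^ 2 + (a₀ - Real.pi * w ^ 2) := fun C => by
    rw [hA, ← hshift]
    congr with ξ
    ring
  have hk : a₀ - Real.pi * w ^ 2 ≤ 0 := by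
    have h : ∫ ξ, (normSq (sigmaSlope r ξ) - (r ξ - w / 2 + psiSlope r ξ) ^ 2) ∂muSphere
        = -∫ ξ, ((r ξ + psiSlope r ξ + -w / 2) ^ 2 - normSq (sigmaSlope r ξ)) ∂muSphere := by
      rw [← integral_neg]
      congr with ξ
      ring
    rw [h, hshift] at hineq
    linarith
  intro C₁ C₂ hC₁ hC₁₂
  rw [hI, hI, hA', hA']
  exact volume_ratio_le_of_le hk (by linarith) (by linarith)

end
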